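/- Suppose the Euler characteristic χ(Σ) is nonzero and α < λ_g(Σ). For 0 < ε < 4π let u_ε ∈ 𝒦_g with ‖u_ε‖_{1,α} = 1 be a maximizer of ∫_Σ e^{(4π−ε) u²} dv_g over {u ∈ 𝒦_g : ‖u‖_{1,α} ≤ 1}. Then lim_{ε→0} ∫_Σ e^{(4π−ε) u_ε²} dv_g = sup{∫_Σ e^{4π u²} dv_g : u ∈ 𝒦_g, ‖u‖_{1,α} ≤ 1}, where both sides may equal +∞. -/

import Mathlib

/-!
Abstract framework for a compact Riemannian surface `(Σ, g)` without boundary.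
Since Mathlib does not yet have Riemannian metrics, curvature, or Sobolev
spaces on manifolds, we abstract the geometric data:

* `M`            : the underlying (compact) surface `Σ`;
* `vol`          : the Riemannian volume measure `dv_g`;
* `K : M → ℝ`    : the Gaussian curvature `K_g`;
* `gradSq u`     : the pointwise squared gradient `|∇_g u|²`;
* `W12`          : the Sobolev space `W^{1,2}(Σ)`, as a set of functions;
* `χ : ℤ`        : the Euler characteristic, related to `K` by the
                   Gauss–Bonnet formula `∫_Σ K_g dv_g = 2π χ(Σ)`.
-/

open MeasureTheory Real Filter Metric
open scoped ENNReal Topology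

noncomputable section

variable {M : Type*}

/-- The function space `𝒦_g = {u ∈ W^{1,2}(Σ) : ∫_Σ K_g u dv_g = 0}`. -/
def Kspace [MeasurableSpace M] (vol : Measure M) (K : M → ℝ)
    (W12 : Set (M → ℝ)) : Set (M → ℝ) :=
  {u | u ∈ W12 ∧ ∫ x, K x * u x ∂vol = 0}

/-- `λ_g(Σ) = inf {∫_Σ |∇_g u|² dv_g : u ∈ 𝒦_g, ∫_Σ u² dv_g = 1}`. -/
def lambdaG [MeasurableSpace M] (vol : Measure M) (K : M → ℝ)
    (gradSq : (M → ℝ) → M → ℝ) (W12 : Set (M → ℝ)) : ℝ :=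
  sInf ((fun u => ∫ x, gradSq u x ∂vol) ''
    {u | u ∈ Kspace vol K W12 ∧ ∫ x, (u x) ^ 2 ∂vol = 1})

/-- `‖u‖_{1,α} = (∫_Σ |∇_g u|² dv_g − α ∫_Σ u² dv_g)^{1/2}`. -/
def norm1a [MeasurableSpace M] (vol : Measure M)
    (gradSq : (M → ℝ) → M → ℝ) (α : ℝ) (u : M → ℝ) : ℝ :=
  Real.sqrt ((∫ x, gradSq u x ∂vol) - α * ∫ x, (u x) ^ 2 ∂vol)

/-- `sup_{u ∈ A} ∫_Σ e^{γ u²} dv_g`, valued in `ℝ≥0∞`. -/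
def tmSup [MeasurableSpace M] (vol : Measure M) (γ : ℝ)
    (A : Set (M → ℝ)) : ℝ≥0∞ :=
  ⨆ u ∈ A, ∫⁻ x, ENNReal.ofReal (Real.exp (γ * (u x) ^ 2)) ∂vol

/-!
Write `G(γ) = sup_{w ∈ A} ∫ e^{γ w²}`. By maximality the integrals of the theorem are
`G(4π - ε)`, and `G` is monotone, so it suffices that `G(γ) = sup_{γ' < γ} G(γ')`. Exchanging
the suprema, this is left continuity of `γ ↦ ∫ e^{γ w²}` for each `w`. As `w` need not be
measurable, monotone convergence is unavailable; instead, replacing `γ` by `γ'` in the integrand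
truncated at height `e^{γ N}` costs only a factor `e^{-(γ - γ') N} → 1`, and the integral of a
finite function is the supremum of the integrals of its truncations.
-/

theorem lintegral_eq_iSup_lintegral_min_natCast {α : Type*} [MeasurableSpace α] (μ : Measure α)
    (F : α → ℝ≥0∞) (hF : ∀ x, F x ≠ ∞) :
    ∫⁻ x, F x ∂μ = ⨆ n : ℕ, ∫⁻ x, min (F x) n ∂μ := by
  refine le_antisymm ?_ (iSup_le fun n => lintegral_mono fun x => min_le_left _ _)
  rw [lintegral_def]
  refine iSup₂_le fun g hg => ?_
  obtain ⟨C, hC, hgC⟩ : ∃ C : ℝ≥0∞, C ≠ ∞ ∧ ∀ x, g x ≤ C := by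
    refine ⟨g.range.sup id, ?_, fun x => Finset.le_sup (f := id) (g.mem_range_self x)⟩
    refine (Finset.sup_lt_iff (by simp : (⊥ : ℝ≥0∞) < ∞)).2 (fun b hb => ?_) |>.ne
    obtain ⟨x, rfl⟩ := SimpleFunc.mem_range.1 hb
    exact (hg x).trans_lt (lt_top_iff_ne_top.2 (hF x))
  obtain ⟨n, hn⟩ := ENNReal.exists_nat_gt hC
  calc g.lintegral μ = ∫⁻ x, g x ∂μ := (SimpleFunc.lintegral_eq_lintegral g μ).symm
    _ ≤ ∫⁻ x, min (F x) n ∂μ := lintegral_mono fun x => le_min (hg x) ((hgC x).trans hn.le)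
    _ ≤ _ := le_iSup (fun n : ℕ => ∫⁻ x, min (F x) n ∂μ) n

theorem ofReal_exp_mul_min_exp_le {γ γ' : ℝ} (hγ' : 0 ≤ γ') (hγ'γ : γ' ≤ γ)
    (t N : ℝ) :
    ENNReal.ofReal (Real.exp (-((γ - γ') * N))) *
        min (ENNReal.ofReal (Real.exp (γ * t))) (ENNReal.ofReal (Real.exp (γ * N))) ≤
      ENNReal.ofReal (Real.exp (γ' * t)) := by
  rw [← ENNReal.ofReal_min, ← Real.exp_monotone.map_min,
    ← ENNReal.ofReal_mul (Real.exp_nonneg _), ← Real.exp_add]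
  refine ENNReal.ofReal_le_ofReal (Real.exp_le_exp.2 ?_)
  rcases le_total t N with h | h
  · nlinarith [min_le_left (γ * t) (γ * N)]
  · nlinarith [min_le_right (γ * t) (γ * N)]

theorem lintegral_exp_mul_le_iSup_lt {α : Type*} [MeasurableSpace α] (μ : Measure α)
    (t : α → ℝ) {γ : ℝ} (hγ : 0 < γ) :
    ∫⁻ x, ENNReal.ofReal (Real.exp (γ * t x)) ∂μ ≤
      ⨆ γ' < γ, ∫⁻ x, ENNReal.ofReal (Real.exp (γ' * t x)) ∂μ := by
  set S := ⨆ γ' < γ, ∫⁻ x, ENNReal.ofReal (Real.exp (γ' * t x)) ∂μ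
  rw [lintegral_eq_iSup_lintegral_min_natCast μ _ fun _ => ENNReal.ofReal_ne_top]
  refine iSup_le fun n => ?_
  set N : ℝ := n / γ
  set I := ∫⁻ x, min (ENNReal.ofReal (Real.exp (γ * t x))) n ∂μ
  have hn : (n : ℝ≥0∞) ≤ ENNReal.ofReal (Real.exp (γ * N)) := by
    rw [mul_div_cancel₀ _ hγ.ne', ← ENNReal.ofReal_natCast]
    exact ENNReal.ofReal_le_ofReal
      ((le_add_of_nonneg_right zero_le_one).trans (Real.add_one_le_exp _))
  have hscaled :
      ∀ γ' ∈ Set.Ioo 0 γ, ENNReal.ofReal (Real.exp (-((γ - γ') * N))) * I ≤ S := by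
    intro γ' hγ'
    rw [← lintegral_const_mul' _ _ ENNReal.ofReal_ne_top]
    calc _ ≤ ∫⁻ x, ENNReal.ofReal (Real.exp (γ' * t x)) ∂μ := lintegral_mono fun x =>
          (mul_le_mul_right (min_le_min_left _ hn) _).trans
            (ofReal_exp_mul_min_exp_le hγ'.1.le hγ'.2.le (t x) N)
      _ ≤ S := le_iSup₂_of_le γ' hγ'.2 le_rfl
  have hfactor :
      Tendsto (fun γ' => ENNReal.ofReal (Real.exp (-((γ - γ') * N)))) (𝓝[<] γ) (𝓝 1) := by
    have : Continuous fun γ' => ENNReal.ofReal (Real.exp (-((γ - γ') * N))) :=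
      ENNReal.continuous_ofReal.comp (by fun_prop)
    simpa using (this.tendsto γ).mono_left nhdsWithin_le_nhds
  exact le_of_tendsto (by simpa using ENNReal.Tendsto.mul_const hfactor (Or.inl one_ne_zero))
    (eventually_of_mem (Ioo_mem_nhdsLT hγ) hscaled)

section tmSup

variable [MeasurableSpace M] (vol : Measure M) (A : Set (M → ℝ))

theorem tmSup_monotone : Monotone fun γ => tmSup vol γ A := by
  intro γ₁ γ₂ h
  refine iSup₂_mono fun w _ => lintegral_mono fun x => ENNReal.ofReal_le_ofReal
    (Real.exp_le_exp.2 (mul_le_mul_of_nonneg_right h (sq_nonneg _)))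

theorem tmSup_eq_iSup_lt {γ : ℝ} (hγ : 0 < γ) :
    tmSup vol γ A = ⨆ γ' < γ, tmSup vol γ' A := by
  refine le_antisymm ?_ (iSup₂_le fun γ' hγ' => tmSup_monotone vol A hγ'.le)
  refine iSup₂_le fun w hw => (lintegral_exp_mul_le_iSup_lt vol (fun x => w x ^ 2) hγ).trans ?_
  exact iSup₂_mono fun γ' _ => le_iSup₂_of_le w hw le_rfl

theorem tendsto_tmSup_nhdsLT {γ : ℝ} (hγ : 0 < γ) :
    Tendsto (fun γ' => tmSup vol γ' A) (𝓝[<] γ) (𝓝 (tmSup vol γ A)) := by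
  have := (tmSup_monotone vol A).tendsto_nhdsLT γ
  simpa only [sSup_image, Set.mem_Iio, ← tmSup_eq_iSup_lt vol A hγ] using this

end tmSup

theorem subcritical_integrals_tendsto_sup_general
    [MeasurableSpace M]
    (vol : Measure M)
    (K : M → ℝ) (gradSq : (M → ℝ) → M → ℝ) (W12 : Set (M → ℝ))
    (α : ℝ)
    (u : ℝ → M → ℝ)
    (hmax : ∀ ε : ℝ, 0 < ε → ε < 4 * π →
      (∫⁻ x, ENNReal.ofReal (Real.exp ((4 * π - ε) * (u ε x) ^ 2)) ∂vol) =
        tmSup vol (4 * π - ε)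
          {w | w ∈ Kspace vol K W12 ∧ norm1a vol gradSq α w ≤ 1}) :
    Tendsto
      (fun ε : ℝ =>
        ∫⁻ x, ENNReal.ofReal (Real.exp ((4 * π - ε) * (u ε x) ^ 2)) ∂vol)
      (𝓝[>] 0)
      (𝓝 (tmSup vol (4 * π)
        {w | w ∈ Kspace vol K W12 ∧ norm1a vol gradSq α w ≤ 1})) := by
  have h4π : (0 : ℝ) < 4 * π := by positivity
  have hshift : Tendsto (fun ε : ℝ => 4 * π - ε) (𝓝[>] 0) (𝓝[<] (4 * π)) := by
    refine tendsto_nhdsWithin_iff.2 ⟨?_, eventually_mem_nhdsWithin.mono fun ε hε => ?_⟩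
    · simpa using ((continuous_sub_left (4 * π)).tendsto 0).mono_left nhdsWithin_le_nhds
    · simpa using (hε : (0 : ℝ) < ε)
  refine ((tendsto_tmSup_nhdsLT vol _ h4π).comp hshift).congr' ?_
  filter_upwards [Ioo_mem_nhdsGT h4π] with ε hε
  exact (hmax ε hε.1 hε.2).symm

/-- if `u_ε ∈ 𝒦_g`, `‖u_ε‖_{1,α} = 1`, maximizes the
subcritical functional for each `0 < ε < 4π`, then
`lim_{ε→0} ∫_Σ e^{(4π−ε)u_ε²} dv_g = sup {∫_Σ e^{4π u²} dv_g : u ∈ 𝒦_g,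
‖u‖_{1,α} ≤ 1}` (in `ℝ≥0∞`, so both sides may be `+∞`). -/
theorem subcritical_integrals_tendsto_sup
    [TopologicalSpace M] [CompactSpace M] [MeasurableSpace M]
    (vol : Measure M) [IsFiniteMeasure vol]
    (K : M → ℝ) (gradSq : (M → ℝ) → M → ℝ) (W12 : Set (M → ℝ))
    (χ : ℤ) (hGB : ∫ x, K x ∂vol = 2 * π * χ) (hχ : χ ≠ 0)
    (α : ℝ) (hα : α < lambdaG vol K gradSq W12)
    (u : ℝ → M → ℝ)
    (hmem : ∀ ε : ℝ, 0 < ε → ε < 4 * π → u ε ∈ Kspace vol K W12)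
    (hnorm : ∀ ε : ℝ, 0 < ε → ε < 4 * π → norm1a vol gradSq α (u ε) = 1)
    (hmax : ∀ ε : ℝ, 0 < ε → ε < 4 * π →
      (∫⁻ x, ENNReal.ofReal (Real.exp ((4 * π - ε) * (u ε x) ^ 2)) ∂vol) =
        tmSup vol (4 * π - ε)
          {w | w ∈ Kspace vol K W12 ∧ norm1a vol gradSq α w ≤ 1}) :
    Tendsto
      (fun ε : ℝ =>
        ∫⁻ x, ENNReal.ofReal (Real.exp ((4 * π - ε) * (u ε x) ^ 2)) ∂vol)
      (𝓝[>] 0)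
      (𝓝 (tmSup vol (4 * π)
        {w | w ∈ Kspace vol K W12 ∧ norm1a vol gradSq α w ≤ 1})) :=
  subcritical_integrals_tendsto_sup_general vol K gradSq W12 α u hmax
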